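/- Fix integers n ≥ 1 and m ≥ 1. For every convex body K ⊂ ℝ^n and every invertible affine map A: ℝ^n → ℝ^n, one has Vol_n(AK)^{nm−m}·Vol_{nm}(Π^{∘,m}(AK)) = Vol_n(K)^{nm−m}·Vol_{nm}(Π^{∘,m}K); that is, the functional K ↦ Vol_n(K)^{nm−m}·Vol_{nm}(Π^{∘,m}K) on convex bodies in ℝ^n is invariant under invertible affine transformations. -/

import Mathlib

open Pointwise MeasureTheory Filter Metric Topology

noncomputable section

abbrev Euc (n : ℕ) : Type := EuclideanSpace ℝ (Fin n)
abbrev EucM (n m : ℕ) : Type := EuclideanSpace ℝ (Fin m × Fin n)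

/-- A convex body in `ℝ^n`: a compact convex set with nonempty interior. -/
def IsConvexBody {n : ℕ} (K : Set (Euc n)) : Prop :=
  Convex ℝ K ∧ IsCompact K ∧ (interior K).Nonempty

/-- The `i`-th `ℝ^n` block of `x̄ ∈ ℝ^{nm}`. -/
def blk {n m : ℕ} (x : EucM n m) (i : Fin m) : Euc n := WithLp.toLp 2 (fun k => x (i, k))

/-- `C_{x̄} = conv{0, x_1, …, x_m}`. -/
def cbody {n m : ℕ} (x : EucM n m) : Set (Euc n) :=
  convexHull ℝ (insert 0 (Set.range (blk x)))

/-- The mixed volume `V_n(K[n−1], L)`, defined via the one-sided limit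
`(1/n)·lim_{ε→0⁺} (Vol_n(K+εL) − Vol_n(K))/ε`. -/
def mixedVol1 (n : ℕ) (K L : Set (Euc n)) : ℝ :=
  (n : ℝ)⁻¹ * limUnder (𝓝[>] (0:ℝ))
    (fun ε : ℝ => ((volume (K + ε • L)).toReal - (volume K).toReal) / ε)

/-- The `m`th-order polar projection body `Π^{∘,m}K ⊆ ℝ^{nm}`. -/
def polarProjBody (n m : ℕ) (K : Set (Euc n)) : Set (EucM n m) :=
  {x | (n : ℝ) * mixedVol1 n K (cbody (-x)) ≤ 1}

/-- The `m`th-order covariogram `g_{K,m}(x̄) = Vol_n(K ∩ ⋂ᵢ (xᵢ + K))`. -/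
def covariogram (n m : ℕ) (K : Set (Euc n)) (x : EucM n m) : ℝ :=
  (volume (K ∩ ⋂ i : Fin m, (blk x i +ᵥ K))).toReal

/-- The closed Euclidean unit ball `B_2^n`. -/
def ball01 (n : ℕ) : Set (Euc n) := Metric.closedBall 0 1

/-- `ω_k = Vol_k(B_2^k)`. -/
def omega (k : ℕ) : ℝ := (volume (Metric.closedBall (0 : Euc k) 1)).toReal

/-- The mean width `W_n(L) = (1/ω_n)·V_n(B_2^n[n−1], L)`. -/
def meanWidth (n : ℕ) (L : Set (Euc n)) : ℝ := (omega n)⁻¹ * mixedVol1 n (ball01 n) L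

/-- `𝔼[W_n(C_Θ̄)^{−nm}]`: the average of `θ̄ ↦ W_n(C_{θ̄})^{−nm}` over the unit sphere
`S^{nm−1}` with respect to the uniform (rotation-invariant) probability measure, realized
as the normalized `(nm−1)`-dimensional Hausdorff measure on the sphere. -/
def EWinv (n m : ℕ) : ℝ :=
  ⨍ θ in Metric.sphere (0 : EucM n m) 1,
    (meanWidth n (cbody θ) ^ (n * m))⁻¹ ∂(μH[(n * m - 1 : ℝ)])

/-- The surface area `Vol_{n−1}(∂K) = lim_{ε→0⁺} (Vol_n(K+εB_2^n) − Vol_n(K))/ε`. -/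
def surfaceArea (n : ℕ) (K : Set (Euc n)) : ℝ :=
  limUnder (𝓝[>] (0:ℝ))
    (fun ε : ℝ => ((volume (K + ε • ball01 n)).toReal - (volume K).toReal) / ε)

/-- An ellipsoid: the image of `B_2^n` under an invertible affine map. -/
def IsEllipsoid {n : ℕ} (K : Set (Euc n)) : Prop :=
  ∃ A : Euc n ≃ᵃ[ℝ] Euc n, K = A '' ball01 n

/-- An `n`-dimensional simplex: the convex hull of `n+1` affinely independent points. -/
def IsSimplex {n : ℕ} (K : Set (Euc n)) : Prop :=
  ∃ v : Fin (n + 1) → Euc n, AffineIndependent ℝ v ∧ K = convexHull ℝ (Set.range v)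

/-- `L` is a homothet of `K`: `L = λ•K + b` with `λ > 0`. -/
def Homothetic {n : ℕ} (K L : Set (Euc n)) : Prop :=
  ∃ l : ℝ, 0 < l ∧ ∃ b : Euc n, L = b +ᵥ l • K

/-- `E` is the John ellipsoid of `K`: the maximal-volume ellipsoid contained in `K`. -/
def IsJohnEllipsoid {n : ℕ} (K E : Set (Euc n)) : Prop :=
  IsEllipsoid E ∧ E ⊆ K ∧ ∀ E' : Set (Euc n), IsEllipsoid E' → E' ⊆ K → volume E' ≤ volume E

/-- The volume ratio `v.r.(K) = (Vol_n(K)/Vol_n(E))^{1/n}` of `K` relative to an ellipsoid `E`. -/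
def volumeRatio {n : ℕ} (K E : Set (Euc n)) : ℝ :=
  ((volume K).toReal / (volume E).toReal) ^ ((n : ℝ)⁻¹)

/-- The minimal isoperimetric ratio `∂_K = min_{T ∈ GL_n(ℝ)} Vol_{n−1}(∂(TK))/Vol_n(TK)^{(n−1)/n}`. -/
def minIsoRatio (n : ℕ) (K : Set (Euc n)) : ℝ :=
  sInf {r : ℝ | ∃ T : Euc n ≃ₗ[ℝ] Euc n,
    r = surfaceArea n (T '' K) / (volume (T '' K)).toReal ^ (((n : ℝ) - 1) / (n : ℝ))}

/-- The mixed volume of an `n`-tuple of sets (indexed by `ι` with `card ι = n`),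
`V_n(K_1,…,K_n) = (1/n!)·Σ_{∅≠S} (−1)^{n−|S|}·Vol_n(Σ_{i∈S} K_i)`. -/
def mixedVolume (n : ℕ) {ι : Type} [Fintype ι] (K : ι → Set (Euc n)) : ℝ :=
  (n.factorial : ℝ)⁻¹ *
    ∑ S ∈ Finset.univ.powerset.filter (fun S : Finset ι => S.Nonempty),
      (-1 : ℝ) ^ (n - S.card) * (volume (∑ i ∈ S, K i)).toReal

/-- The `m`th-order mixed polar projection body `Π^{∘,m}(K_1,…,K_{n−1}) ⊆ ℝ^{nm}`. -/
def mixedPolarProjBody (n m : ℕ) (K : Fin (n - 1) → Set (Euc n)) : Set (EucM n m) :=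
  {x | (n : ℝ) * mixedVolume n (fun o : Option (Fin (n - 1)) => o.elim (cbody (-x)) K) ≤ 1}


/-! Translations change neither volumes nor the mixed volumes `V_n(K[n−1], L)`. For linear `T`
with `c = |det T|` one has `Vol(TK + εL) = c·Vol(K + ε T⁻¹L)`, and the substitution `ε ↦ c⁻¹ε`
in the difference quotient gives `V_n(TK[n−1], L) = V_n(K[n−1], c·T⁻¹L)`. Since
`c·T⁻¹ C_{x̄} = C_{G x̄}` for `G` the blockwise action of `c·T⁻¹` on `ℝ^{nm}`,
`Π^{∘,m}(TK) = G⁻¹ Π^{∘,m}K`, and `|det G| = (cⁿ·c⁻¹)^m = c^{nm−m}` exactly cancels the factor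
`c^{nm−m}` gained by `Vol_n(TK)^{nm−m}`. -/

theorem limUnder_nhdsGT_zero_comp_mul_left {𝕜 α : Type*} [Field 𝕜] [LinearOrder 𝕜]
    [IsStrictOrderedRing 𝕜] [TopologicalSpace 𝕜] [OrderTopology 𝕜] [TopologicalSpace α]
    [Nonempty α] {c : 𝕜} (hc : 0 < c) (f : 𝕜 → α) :
    limUnder (𝓝[>] 0) (fun ε => f (c * ε)) = limUnder (𝓝[>] 0) f := by
  have hmap : map (c * ·) (𝓝[>] (0 : 𝕜)) = 𝓝[>] 0 := by
    conv_lhs => rw [← comap_mulLeft_nhdsGT_zero hc]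
    exact map_comap_of_surjective (mul_left_surjective₀ hc.ne') _
  conv_rhs => rw [← hmap]
  rw [limUnder, limUnder, map_map]
  rfl

theorem AffineEquiv.image_eq_vadd_image_linear {k V : Type*} [Ring k] [AddCommGroup V]
    [Module k V] (A : V ≃ᵃ[k] V) (s : Set V) : A '' s = A 0 +ᵥ A.linear '' s := by
  rw [← Set.image_vadd, Set.image_image]
  congr! 1 with x
  simpa [add_comm] using A.map_vadd 0 x

section PolarProjBody

variable {n m : ℕ}

theorem mixedVol1_vadd_left (a : Euc n) (K L : Set (Euc n)) :
    mixedVol1 n (a +ᵥ K) L = mixedVol1 n K L := by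
  simp only [mixedVol1, vadd_add_assoc, measure_vadd]

theorem mixedVol1_image_linearEquiv (T : Euc n ≃ₗ[ℝ] Euc n) (K L : Set (Euc n)) :
    mixedVol1 n (T '' K) L = mixedVol1 n K (|T.toLinearMap.det| • (T.symm '' L)) := by
  set c := |T.toLinearMap.det|
  have hc : 0 < c := abs_pos.mpr (LinearEquiv.isUnit_det' T).ne_zero
  have hvol (S : Set (Euc n)) : (volume (T '' S)).toReal = c * (volume S).toReal := by
    rw [← LinearEquiv.coe_coe, Measure.addHaar_image_linearMap, ENNReal.toReal_mul,
      ENNReal.toReal_ofReal hc.le]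
  have hsum (ε : ℝ) : T '' K + ε • L = T '' (K + ε • T.symm '' L) := by
    rw [Set.image_add, image_smul_set, Set.image_image]
    simp
  unfold mixedVol1
  congr 1
  -- the two difference quotients agree pointwise after `ε ↦ c⁻¹ε`, so no limit need exist
  conv_rhs => rw [← limUnder_nhdsGT_zero_comp_mul_left (inv_pos.2 hc)]
  congr 1 with ε
  rw [smul_smul, mul_right_comm, inv_mul_cancel₀ hc.ne', one_mul, hsum, hvol, hvol]
  field_simp

theorem polarProjBody_vadd (a : Euc n) (K : Set (Euc n)) :
    polarProjBody n m (a +ᵥ K) = polarProjBody n m K := by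
  simp only [polarProjBody, mixedVol1_vadd_left]

def blockEquiv : EucM n m ≃ₗ[ℝ] (Fin m → Euc n) :=
  (WithLp.linearEquiv 2 ℝ _).trans <| (LinearEquiv.curry ℝ ℝ (Fin m) (Fin n)).trans <|
    LinearEquiv.piCongrRight fun _ => (WithLp.linearEquiv 2 ℝ (Fin n → ℝ)).symm

theorem blockEquiv_apply (x : EucM n m) (i : Fin m) : blockEquiv x i = blk x i := rfl

def blockwise (g : Euc n →ₗ[ℝ] Euc n) : EucM n m →ₗ[ℝ] EucM n m :=
  (blockEquiv (n := n) (m := m)).symm.toLinearMap ∘ₗ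
    LinearMap.pi (fun i => g ∘ₗ LinearMap.proj i) ∘ₗ blockEquiv.toLinearMap

theorem blk_blockwise (g : Euc n →ₗ[ℝ] Euc n) (x : EucM n m) (i : Fin m) :
    blk (blockwise g x) i = g (blk x i) := by
  rw [← blockEquiv_apply, blockwise, LinearMap.comp_apply, LinearMap.comp_apply,
    LinearEquiv.coe_coe, LinearEquiv.apply_symm_apply]
  rfl

theorem det_blockwise (g : Euc n →ₗ[ℝ] Euc n) :
    (blockwise (m := m) g).det = g.det ^ m := by
  rw [blockwise, ← LinearEquiv.symm_symm blockEquiv, LinearEquiv.symm_symm blockEquiv.symm,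
    LinearMap.det_conj, LinearMap.det_pi, Finset.prod_const, Finset.card_univ, Fintype.card_fin]

theorem image_cbody (g : Euc n →ₗ[ℝ] Euc n) (x : EucM n m) :
    g '' cbody x = cbody (blockwise g x) := by
  rw [cbody, cbody, LinearMap.image_convexHull, Set.image_insert_eq, map_zero, ← Set.range_comp]
  simp only [Function.comp_def, ← blk_blockwise]

theorem polarProjBody_image_linearEquiv (T : Euc n ≃ₗ[ℝ] Euc n) (K : Set (Euc n)) :
    polarProjBody n m (T '' K) =
      blockwise (|T.toLinearMap.det| • T.symm.toLinearMap) ⁻¹' polarProjBody n m K := by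
  ext x
  simp only [polarProjBody, Set.mem_preimage, Set.mem_ofPred_eq]
  rw [mixedVol1_image_linearEquiv, ← Set.image_smul, Set.image_image, ← map_neg,
    ← image_cbody]
  rfl

theorem volume_polarProjBody_image_linearEquiv (T : Euc n ≃ₗ[ℝ] Euc n) (K : Set (Euc n)) :
    volume (polarProjBody n m (T '' K)) =
      ENNReal.ofReal (|T.toLinearMap.det| ^ ((m : ℤ) - n * m)) * volume (polarProjBody n m K) := by
  have hd : T.toLinearMap.det ≠ 0 := (LinearEquiv.isUnit_det' T).ne_zero
  have hdet : (blockwise (m := m) (|T.toLinearMap.det| • T.symm.toLinearMap)).det =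
      (|T.toLinearMap.det| ^ n * T.toLinearMap.det⁻¹) ^ m := by
    rw [det_blockwise, LinearMap.det_smul, finrank_euclideanSpace_fin, LinearEquiv.det_coe_symm]
  rw [polarProjBody_image_linearEquiv, Measure.addHaar_preimage_linearMap _ (by simp [hdet, hd]),
    hdet]
  congr 2
  rw [abs_inv, abs_pow, abs_mul, abs_pow, abs_abs, abs_inv, zpow_sub₀ (abs_ne_zero.2 hd),
    zpow_mul, zpow_natCast, zpow_natCast, zpow_natCast, mul_pow, inv_pow, ← div_eq_mul_inv,
    inv_div]

end PolarProjBody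

theorem petty_product_affine_invariant_general
    (n m : ℕ) (hn : 1 ≤ n)
    (K : Set (Euc n)) (A : Euc n ≃ᵃ[ℝ] Euc n) :
    (volume (A '' K)).toReal ^ (n * m - m) * (volume (polarProjBody n m (A '' K))).toReal =
      (volume K).toReal ^ (n * m - m) * (volume (polarProjBody n m K)).toReal := by
  rw [A.image_eq_vadd_image_linear, measure_vadd, polarProjBody_vadd,
    volume_polarProjBody_image_linearEquiv, ← LinearEquiv.coe_coe,
    Measure.addHaar_image_linearMap]
  set c := |A.linear.toLinearMap.det|
  have hc : 0 < c := abs_pos.mpr (LinearEquiv.isUnit_det' A.linear).ne_zero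
  have hexp : ((n * m - m : ℕ) : ℤ) + ((m : ℤ) - n * m) = 0 := by
    push_cast [Nat.le_mul_of_pos_left m hn]
    ring
  simp only [ENNReal.toReal_mul, ENNReal.toReal_ofReal hc.le,
    ENNReal.toReal_ofReal (zpow_nonneg hc.le _)]
  rw [mul_pow, mul_mul_mul_comm, ← zpow_natCast c, ← zpow_add₀ hc.ne', hexp, zpow_zero,
    one_mul]

theorem petty_product_affine_invariant
    (n m : ℕ) (hn : 1 ≤ n) (hm : 1 ≤ m)
    (K : Set (Euc n)) (hK : IsConvexBody K) (A : Euc n ≃ᵃ[ℝ] Euc n) :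
    (volume (A '' K)).toReal ^ (n * m - m) * (volume (polarProjBody n m (A '' K))).toReal =
      (volume K).toReal ^ (n * m - m) * (volume (polarProjBody n m K)).toReal :=
  petty_product_affine_invariant_general n m hn K A
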